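/- For every ε > 0 there exists n₀ such that for all n ≥ n₀ and every integer j with 1 ≤ j ≤ n^{1/5}, the critical Erdős–Rényi random graph G(n,1/n) satisfies P( C(1) contains a cycle | |C(1)| = j ) ≤ ε. -/

import Mathlib

open MeasureTheory Filter
open scoped ENNReal

/-- The Erdős–Rényi `G(n, 1/n)` measure on edge configurations of `K_n`:
each potential edge is retained (`true`) independently with probability `1/n`. -/
noncomputable def erMeasure (n : ℕ) : Measure (Sym2 (Fin n) → Bool) :=
  Measure.pi fun _ => (PMF.bernoulli (min (n : ℝ≥0∞)⁻¹ 1).toNNReal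
    (by simpa using ENNReal.toNNReal_mono ENNReal.one_ne_top (min_le_right (n : ℝ≥0∞)⁻¹ 1))).toMeasure

instance (n : ℕ) : IsProbabilityMeasure (erMeasure n) := by
  unfold erMeasure; infer_instance

/-- The simple graph on `Fin n` determined by an edge configuration. -/
def graphOf {n : ℕ} (ω : Sym2 (Fin n) → Bool) : SimpleGraph (Fin n) where
  Adj u v := u ≠ v ∧ ω s(u, v) = true
  symm := by
    refine ⟨?_⟩
    intro u v h
    exact ⟨Ne.symm h.1, by rw [Sym2.eq_swap]; exact h.2⟩
  loopless := by
    refine ⟨?_⟩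
    intro u h
    exact h.1 rfl

/-- Size of the connected component of `v`. -/
noncomputable def compSize {n : ℕ} (G : SimpleGraph (Fin n)) (v : Fin n) : ℕ :=
  Nat.card {w : Fin n | G.Reachable v w}

/-- Diameter of a finite graph: maximal distance between two vertices. -/
noncomputable def gdiam {n : ℕ} (G : SimpleGraph (Fin n)) : ℕ :=
  Finset.univ.sup fun p : Fin n × Fin n => G.dist p.1 p.2

open scoped Classical in
/-- Diameter of the connected component of `x`. -/
noncomputable def compDiam {n : ℕ} (G : SimpleGraph (Fin n)) (x : Fin n) : ℕ :=
  Finset.univ.sup fun p : Fin n × Fin n =>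
    if G.Reachable x p.1 ∧ G.Reachable x p.2 then G.dist p.1 p.2 else 0

/-- Product of the weights of the edges of `T`. -/
noncomputable def treeWeight {n : ℕ} (w : Sym2 (Fin n) → ℝ) (T : SimpleGraph (Fin n)) : ℝ :=
  letI : Fintype T.edgeSet := Fintype.ofFinite _
  ∏ e ∈ T.edgeSet.toFinset, w e

open scoped Classical in
/-- Probability that the `w`-weighted uniform spanning tree of `K_n` lies in `E`. -/
noncomputable def ustProb {n : ℕ} (w : Sym2 (Fin n) → ℝ) (E : Set (SimpleGraph (Fin n))) : ℝ :=
  (∑ T ∈ Finset.univ.filter (fun T : SimpleGraph (Fin n) => T.IsTree ∧ T ∈ E), treeWeight w T) /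
    (∑ T ∈ Finset.univ.filter (fun T : SimpleGraph (Fin n) => T.IsTree), treeWeight w T)

/-- The random weights: heavy edges get weight `n^(1+γ)`, the others weight `1`. -/
noncomputable def weightFn (n : ℕ) (γ : ℝ) (ω : Sym2 (Fin n) → Bool) (e : Sym2 (Fin n)) : ℝ :=
  if ω e then (n : ℝ) ^ ((1 : ℝ) + γ) else 1

/-- The connected component of `v`, viewed as a subgraph (the induced subgraph on the
vertices reachable from `v`), contains a cycle, i.e. it is not a tree. -/
def compHasCycle {n : ℕ} (G : SimpleGraph (Fin n)) (v : Fin n) : Prop :=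
  ¬ (G.induce {w | G.Reachable v w}).IsAcyclic

/-!
A switching argument. If the component of a vertex has `j` vertices and contains a cycle, then
some edge of it is not a bridge, and deleting that edge leaves the vertex set of the component
unchanged. Deleting an edge multiplies the probability of a configuration by `(1 - p) / p`, and
a configuration whose component has `j` vertices arises in this way from at most `j ^ 2`
configurations, since the deleted edge has both ends in the component. Hence
`P(cycle, |C| = j) (1 - p) ≤ j ^ 2 p P(|C| = j)`, so with `p = 1 / n` the conditional probability
is at most `2 j ^ 2 / n ≤ 2 n ^ (-3/5)` when `j ≤ n ^ (1/5)`.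
-/

open scoped NNReal

namespace SimpleGraph

variable {V V' : Type*} {G : SimpleGraph V}

lemma not_isBridge_map_of_not_isBridge {G' : SimpleGraph V'} (f : G ↪g G') {e : Sym2 V}
    (he : e ∈ G.edgeSet) (h : ¬ G.IsBridge e) : ¬ G'.IsBridge (e.map f) := by
  rw [isBridge_iff_forall_cycle_notMem he] at h
  push Not at h
  obtain ⟨u, p, hp, hep⟩ := h
  refine fun hb => hb.notMem_edges_of_isCycle (p := p.map f.toHom) (hp.map f.injective) ?_
  rw [Walk.edges_map]
  exact List.mem_map_of_mem hep

lemma reachable_deleteEdges_iff_of_not_isBridge {x y u w : V} (h : ¬ G.IsBridge s(x, y)) :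
    (G.deleteEdges {s(x, y)}).Reachable u w ↔ G.Reachable u w := by
  refine ⟨fun huw => huw.mono (deleteEdges_le _), fun huw => ?_⟩
  rw [isBridge_iff, not_not] at h
  have hadj (a b : V) (hab : G.Adj a b) : (G.deleteEdges {s(x, y)}).Reachable a b := by
    by_cases hxy : s(a, b) = s(x, y)
    · rcases Sym2.eq_iff.mp hxy with ⟨rfl, rfl⟩ | ⟨rfl, rfl⟩
      exacts [h, h.symm]
    · exact (deleteEdges_adj.mpr ⟨hab, hxy⟩).reachable
  rw [reachable_eq_reflTransGen] at huw hadj ⊢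
  exact Relation.reflTransGen_closed hadj _ _ huw

lemma exists_not_isBridge_of_not_isAcyclic_induce {v : V}
    (h : ¬ (G.induce {w | G.Reachable v w}).IsAcyclic) :
    ∃ x y, G.Adj x y ∧ ¬ G.IsBridge s(x, y) ∧ G.Reachable v x ∧ G.Reachable v y := by
  rw [isAcyclic_iff_forall_adj_isBridge] at h
  push Not at h
  obtain ⟨a, b, hab, hb⟩ := h
  exact ⟨a, b, hab, not_isBridge_map_of_not_isBridge (Embedding.induce _) hab hb, a.2, b.2⟩

end SimpleGraph

section BernoulliProduct

variable {α : Type*} [Fintype α] {p : ℝ≥0} (hp : p ≤ 1)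

lemma pi_bernoulli_singleton (ω : α → Bool) :
    Measure.pi (fun _ : α => (PMF.bernoulli p hp).toMeasure) {ω}
      = ∏ e, if ω e then (p : ℝ≥0∞) else 1 - p := by
  rw [← Set.univ_pi_singleton ω, Measure.pi_pi]
  refine Finset.prod_congr rfl fun e _ => ?_
  rw [PMF.toMeasure_apply_singleton _ _ (measurableSet_singleton _)]
  cases ω e <;> rfl

lemma pi_bernoulli_singleton_mul_one_sub [DecidableEq α] {ω : α → Bool} {e : α} (he : ω e = true) :
    Measure.pi (fun _ : α => (PMF.bernoulli p hp).toMeasure) {ω} * (1 - p)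
      = Measure.pi (fun _ : α => (PMF.bernoulli p hp).toMeasure)
          {Function.update ω e false} * p := by
  have hrest : ∏ x ∈ Finset.univ.erase e,
      (if Function.update ω e false x then (p : ℝ≥0∞) else 1 - p)
        = ∏ x ∈ Finset.univ.erase e, if ω x then (p : ℝ≥0∞) else 1 - p :=
    Finset.prod_congr rfl fun x hx => by rw [Function.update_of_ne (Finset.ne_of_mem_erase hx)]
  simp only [pi_bernoulli_singleton, ← Finset.mul_prod_erase Finset.univ _ (Finset.mem_univ e),
    Function.update_self, he, hrest, if_true, Bool.false_eq_true, if_false]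
  ring

lemma pi_bernoulli_mul_one_sub_le [DecidableEq α] {A S : Finset (α → Bool)} {K : ℕ}
    (e : (α → Bool) → α) (F : (α → Bool) → Finset α) (he : ∀ ω ∈ A, ω (e ω) = true)
    (hS : ∀ ω ∈ A, Function.update ω (e ω) false ∈ S)
    (hF : ∀ ω ∈ A, e ω ∈ F (Function.update ω (e ω) false)) (hK : ∀ ω ∈ S, (F ω).card ≤ K) :
    Measure.pi (fun _ : α => (PMF.bernoulli p hp).toMeasure) A * (1 - p)
      ≤ K * p * Measure.pi (fun _ : α => (PMF.bernoulli p hp).toMeasure) S := by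
  set μ := Measure.pi fun _ : α => (PMF.bernoulli p hp).toMeasure
  set r : (α → Bool) → α → Bool := fun ω => Function.update ω (e ω) false
  have hfiber (ω' : α → Bool) (hω' : ω' ∈ S) : (A.filter fun ω => r ω = ω').card ≤ K := by
    refine (Finset.card_le_card_of_injOn e (fun ω hω => ?_) fun ω₁ hω₁ ω₂ hω₂ h => ?_).trans
      (hK ω' hω')
    · obtain ⟨hωA, rfl⟩ := Finset.mem_filter.mp hω
      exact hF ω hωA
    · obtain ⟨hA₁, h₁⟩ := Finset.mem_filter.mp hω₁
      obtain ⟨hA₂, h₂⟩ := Finset.mem_filter.mp hω₂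
      have hrec (ω) (hω : ω ∈ A) : Function.update (r ω) (e ω) true = ω := by
        simp [r, ← he ω hω]
      rw [← hrec ω₁ hA₁, ← hrec ω₂ hA₂, h, h₁, h₂]
  calc μ A * (1 - p) = ∑ ω ∈ A, μ {r ω} * p := by
        rw [← sum_measure_singleton, Finset.sum_mul]
        exact Finset.sum_congr rfl fun ω hω => pi_bernoulli_singleton_mul_one_sub hp (he ω hω)
    _ = ∑ ω' ∈ S, ∑ ω ∈ A with r ω = ω', μ {ω'} * p :=
        (Finset.sum_fiberwise_of_maps_to' hS fun ω' => μ {ω'} * p).symm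
    _ ≤ ∑ ω' ∈ S, K * (μ {ω'} * p) := by
        refine Finset.sum_le_sum fun ω' hω' => ?_
        rw [Finset.sum_const, nsmul_eq_mul]
        gcongr
        exact hfiber ω' hω'
    _ = K * p * μ S := by
        rw [← sum_measure_singleton, Finset.mul_sum]
        exact Finset.sum_congr rfl fun _ _ => by ring

end BernoulliProduct

lemma graphOf_update_false {n : ℕ} (ω : Sym2 (Fin n) → Bool) (e : Sym2 (Fin n)) :
    graphOf (Function.update ω e false) = (graphOf ω).deleteEdges {e} := by
  ext u w
  change u ≠ w ∧ _ ↔ (u ≠ w ∧ _) ∧ _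
  by_cases h : s(u, w) = e
  · simp +contextual [h]
  · simp [h]

lemma exists_removable_edge_of_compHasCycle {n : ℕ} {ω : Sym2 (Fin n) → Bool} {v : Fin n}
    (h : compHasCycle (graphOf ω) v) :
    ∃ e, ω e = true ∧ (∀ x ∈ e, (graphOf ω).Reachable v x) ∧
      ∀ w, (graphOf (Function.update ω e false)).Reachable v w ↔ (graphOf ω).Reachable v w := by
  obtain ⟨x, y, hxy, hb, hx, hy⟩ := SimpleGraph.exists_not_isBridge_of_not_isAcyclic_induce h
  refine ⟨s(x, y), hxy.2, fun z hz => ?_, fun w => ?_⟩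
  · rcases Sym2.mem_iff.mp hz with rfl | rfl
    exacts [hx, hy]
  · rw [graphOf_update_false]
    exact SimpleGraph.reachable_deleteEdges_iff_of_not_isBridge hb

open scoped Classical in
lemma compSize_eq_card_filter {n : ℕ} (G : SimpleGraph (Fin n)) (v : Fin n) :
    compSize G v = (Finset.univ.filter (G.Reachable v)).card := by
  rw [compSize, Nat.card_eq_fintype_card, ← Set.toFinset_card]
  congr 1
  ext w
  simp

open scoped Classical in
lemma erMeasure_inter_compHasCycle_mul_le {n : ℕ} (v : Fin n) (j : ℕ) :
    erMeasure n ({ω | compSize (graphOf ω) v = j} ∩ {ω | compHasCycle (graphOf ω) v})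
        * (1 - min (n : ℝ≥0∞)⁻¹ 1)
      ≤ (j ^ 2 : ℕ) * min (n : ℝ≥0∞)⁻¹ 1 * erMeasure n {ω | compSize (graphOf ω) v = j} := by
  have hq : min (n : ℝ≥0∞)⁻¹ 1 ≠ ⊤ := ne_top_of_le_ne_top ENNReal.one_ne_top (min_le_right _ _)
  set A := Finset.univ.filter fun ω => compSize (graphOf ω) v = j ∧ compHasCycle (graphOf ω) v
  set S := Finset.univ.filter fun ω => compSize (graphOf ω) v = j
  have hA : {ω | compSize (graphOf ω) v = j} ∩ {ω | compHasCycle (graphOf ω) v} = ↑A := by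
    simp [A, Set.setOf_and]
  have hS : {ω | compSize (graphOf ω) v = j} = ↑S := by simp [S]
  have : Nonempty (Sym2 (Fin n)) := ⟨s(v, v)⟩
  choose! e he hev hreach using fun ω (hω : ω ∈ A) =>
    exists_removable_edge_of_compHasCycle (Finset.mem_filter.mp hω).2.2
  have hsize (ω) (hω : ω ∈ A) : compSize (graphOf (Function.update ω (e ω) false)) v = j := by
    simp only [compSize, hreach ω hω]
    exact (Finset.mem_filter.mp hω).2.1
  rw [hA, hS, ← ENNReal.coe_toNNReal hq]
  refine pi_bernoulli_mul_one_sub_le _ e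
    (fun ω => (Finset.univ.filter ((graphOf ω).Reachable v)).sym2) he
    (fun ω hω => Finset.mem_filter.mpr ⟨Finset.mem_univ _, hsize ω hω⟩)
    (fun ω hω => Finset.mem_sym2_iff.mpr fun x hx => ?_) fun ω hω => ?_
  · simpa [hreach ω hω] using hev ω hω x hx
  · rw [Finset.card_sym2, ← compSize_eq_card_filter, (Finset.mem_filter.mp hω).2,
      Nat.choose_two_right]
    refine Nat.div_le_of_le_mul ?_
    rcases j with _ | j
    · simp
    · simp only [Nat.add_sub_cancel]; nlinarith

open ProbabilityTheory in
lemma cond_le_of_measure_inter_le {Ω : Type*} [MeasurableSpace Ω] {μ : Measure Ω} {s t : Set Ω}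
    {c : ℝ≥0∞} (hs : MeasurableSet s) (h : μ (s ∩ t) ≤ c * μ s) : μ[t | s] ≤ c :=
  calc μ[t | s] = (μ s)⁻¹ * μ (s ∩ t) := cond_apply hs μ t
    _ ≤ (μ s)⁻¹ * (c * μ s) := by gcongr
    _ = c * ((μ s)⁻¹ * μ s) := by ring
    _ ≤ c := mul_le_of_le_one_right' (ENNReal.inv_mul_le_one _)

open ProbabilityTheory in
lemma cond_compHasCycle_le {n : ℕ} (hn : 2 ≤ n) (v : Fin n) (j : ℕ) :
    (erMeasure n)[{ω | compHasCycle (graphOf ω) v} | {ω | compSize (graphOf ω) v = j}]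
      ≤ 2 * j ^ 2 / n := by
  have hq : min (n : ℝ≥0∞)⁻¹ 1 = (n : ℝ≥0∞)⁻¹ :=
    min_eq_left (ENNReal.inv_le_one.mpr (by exact_mod_cast (by omega : 1 ≤ n)))
  have half_le : (2 : ℝ≥0∞)⁻¹ ≤ 1 - (n : ℝ≥0∞)⁻¹ :=
    calc (2 : ℝ≥0∞)⁻¹ = 1 - 2⁻¹ := ENNReal.one_sub_inv_two.symm
      _ ≤ 1 - (n : ℝ≥0∞)⁻¹ := by gcongr; exact_mod_cast hn
  have key := erMeasure_inter_compHasCycle_mul_le v j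
  rw [hq] at key
  refine cond_le_of_measure_inter_le (Set.toFinite _).measurableSet ?_
  calc _ = 2 * (erMeasure n (_ ∩ _) * 2⁻¹) := by
        rw [mul_comm, mul_assoc, ENNReal.inv_mul_cancel two_ne_zero ENNReal.ofNat_ne_top, mul_one]
    _ ≤ 2 * (j ^ 2 * (n : ℝ≥0∞)⁻¹ * erMeasure n _) :=
        mul_le_mul_right (by exact_mod_cast (mul_le_mul_right half_le _).trans key) 2
    _ = 2 * j ^ 2 / n * erMeasure n _ := by rw [div_eq_mul_inv]; ring

lemma two_mul_sq_div_le_of_le_rpow {x y : ℝ} (hx : 0 < x) (hy : 0 ≤ y) (h : y ≤ x ^ (1 / 5 : ℝ)) :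
    2 * y ^ 2 / x ≤ 2 * x ^ (-(3 / 5) : ℝ) := by
  have hy2 : y ^ 2 ≤ x ^ (2 / 5 : ℝ) := by
    calc y ^ 2 ≤ (x ^ (1 / 5 : ℝ)) ^ 2 := by gcongr
      _ = x ^ (2 / 5 : ℝ) := by rw [← Real.rpow_natCast, ← Real.rpow_mul hx.le]; norm_num
  calc 2 * y ^ 2 / x ≤ 2 * x ^ (2 / 5 : ℝ) / x := by gcongr
    _ = 2 * x ^ (-(3 / 5) : ℝ) := by
      rw [mul_div_assoc, ← Real.rpow_sub_one hx.ne']; norm_num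

/-- For every `ε > 0` there is `n₀` such that for all `n ≥ n₀` and every
integer `j` with `1 ≤ j ≤ n^{1/5}`, in `G(n, 1/n)` the conditional probability that the
component of the first vertex contains a cycle, given that it has exactly `j` vertices,
is at most `ε`. -/
theorem component_cycle_conditional (ε : ℝ) (hε : 0 < ε) :
    ∃ n₀ : ℕ, ∀ n ≥ n₀, ∀ hn : 0 < n, ∀ j : ℕ, 1 ≤ j → (j : ℝ) ≤ (n : ℝ) ^ ((1 : ℝ) / 5) →
      (ProbabilityTheory.cond (erMeasure n) {ω | compSize (graphOf ω) ⟨0, hn⟩ = j}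
        {ω | compHasCycle (graphOf ω) ⟨0, hn⟩}).toReal ≤ ε := by
  have hlim : Tendsto (fun n : ℕ => 2 * (n : ℝ) ^ (-(3 / 5) : ℝ)) atTop (nhds 0) := by
    simpa using ((tendsto_rpow_neg_atTop (by norm_num : (0 : ℝ) < 3 / 5)).comp
      tendsto_natCast_atTop_atTop).const_mul 2
  obtain ⟨n₀, hn₀⟩ := (hlim.eventually_le_const hε).exists_forall_of_atTop
  refine ⟨max n₀ 2, fun n hn hn0 j _ hjn => ?_⟩
  have hnR : (0 : ℝ) < n := by exact_mod_cast hn0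
  calc _ ≤ 2 * (j : ℝ) ^ 2 / n := by
        refine (ENNReal.toReal_mono ?_ (cond_compHasCycle_le (by omega) _ j)).trans_eq ?_
        · exact ENNReal.div_ne_top (by finiteness) (by simp [hn0.ne'])
        · simp
    _ ≤ 2 * (n : ℝ) ^ (-(3 / 5) : ℝ) := two_mul_sq_div_le_of_le_rpow hnR j.cast_nonneg hjn
    _ ≤ ε := hn₀ n (le_of_max_le_left hn)
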